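/- Let Γ be a finite group with a representation ρ on finite-dimensional real vector spaces, N ⊴ Γ a normal subgroup, K ⊆ V a subspace with (ρ(γ) - I)(V) ⊆ K for all γ ∈ N and with K invariant under ρ(Γ). Let G = {γ ∈ Γ : ρ(γ)|_K = Id} (a normal subgroup of Γ). Then the composite N ↪ Γ → Γ/G is injective, so N is faithfully represented in the group Γ/G acting on K. -/
import Mathlib


/-- `N` is faithfully represented in `Γ/G`, where `G` is the subgroup of `Γ` fixing `K`
pointwise, provided `(ρ(γ) - I)(V) ⊆ K` for all `γ ∈ N` and `K` is `ρ(Γ)`-invariant. -/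
theorem stmt16 {Γ V : Type*} [Group Γ] [Fintype Γ]
    [AddCommGroup V] [Module ℝ V] [FiniteDimensional ℝ V]
    (ρ : Representation ℝ Γ V) (hfaith : Function.Injective ρ)
    (N : Subgroup Γ) [N.Normal] (K : Submodule ℝ V)
    (hK : ∀ γ ∈ N, ∀ v : V, ρ γ v - v ∈ K)
    (hinv : ∀ γ : Γ, K.map (ρ γ) ≤ K)
    (G : Subgroup Γ) [G.Normal]
    (hG : ∀ γ : Γ, γ ∈ G ↔ ∀ w ∈ K, ρ γ w = w) :
    Function.Injective (fun n : N => (QuotientGroup.mk n.1 : Γ ⧸ G)) := by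
  intro a b hab
  simp only [] at hab
  have hg : (a : Γ)⁻¹ * b ∈ G := (QuotientGroup.eq (s := G)).mp hab
  set g : Γ := (a : Γ)⁻¹ * b with hgdef
  have hgN : g ∈ N := N.mul_mem (N.inv_mem a.2) b.2
  -- show ρ g = 1
  have hfix : ∀ w ∈ K, ρ g w = w := (hG g).mp hg
  have hone : ρ g = 1 := by
    ext v
    have hw : ρ g v - v ∈ K := hK g hgN v
    set w : V := ρ g v - v with hwdef
    have hfw : ρ g w = w := hfix w hw
    have hρv : ρ g v = v + w := by rw [hwdef]; abel
    have key : ∀ k : ℕ, ((ρ g) ^ k) v = v + (k : ℝ) • w := by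
      intro k
      induction k with
      | zero => simp
      | succ k ih =>
        rw [pow_succ', Module.End.mul_apply, ih, map_add, hρv, map_smul, hfw]
        push_cast
        module
    have hm : g ^ (orderOf g) = 1 := pow_orderOf_eq_one g
    have hmpos : 0 < orderOf g := orderOf_pos g
    have : ((ρ g) ^ (orderOf g)) v = v := by
      rw [← map_pow, hm, map_one]; rfl
    rw [key (orderOf g)] at this
    have hw0 : w = 0 := by
      have hc : ((orderOf g : ℝ)) • w = 0 := by
        have := this
        linear_combination (norm := module) this
      rcases smul_eq_zero.mp hc with h | h
      · exact absurd h (by positivity)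
      · exact h
    have : ρ g v = v := by rw [hwdef] at hw0; linear_combination (norm := module) hw0
    simpa using this
  have : g = 1 := hfaith (by rw [hone, map_one])
  have : (a : Γ) = b := by
    rw [hgdef] at this
    exact inv_mul_eq_one.mp this
  exact Subtype.ext this
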